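/- Assume the data assumptions of problem (P), that F₁ is additionally μ-strongly monotone with μ > 0, that (σ_k) is nonincreasing with σ_k > 0, and that the step sizes satisfy 4 t_k² L_k² + 2 t_k σ_k μ ≤ 1 for all k ≥ 1. Then for the optimistic extragradient iterates, for all z ∈ Z and all k ≥ 1: E_{k+1}(z) + D_{k+1} ≤ (1 − t_k σ_k μ)(E_k(z) + D_k) − t_k[⟨F₂(z), z^{k+1/2} − z⟩ + g₂(z^{k+1/2}) − g₂(z) + σ_k(⟨F₁(z), z^{k+1/2} − z⟩ + g₁(z^{k+1/2}) − g₁(z))]. -/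

import Mathlib

/-!
Test the prox inequality of `z^{k+1}` at `z` and that of `z^{k+1/2}` at `z^{k+1}`, and add them.
By the three-point identity this bounds `E_{k+1}(z)` by `E_k(z) - ½‖z^k - z^{k+1/2}‖²`, minus
`t_k` times the gap term, plus the optimistic cross term
`t_k⟪V_k(z^{k-1/2}) - V_k(z^{k+1/2}), z^{k+1} - z^{k+1/2}⟫`, which Young's inequality bounds by
`D_{k+1} + ½‖z^{k+1} - z^{k+1/2}‖²`. Lipschitz continuity gives
`2 D_{k+1} ≤ 2 t_k² L_k² (‖z^k - z^{k+1/2}‖² + ‖z^k - z^{k-1/2}‖²)`, and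
`‖z^k - z^{k-1/2}‖² ≤ 2 D_k` because the prox is nonexpansive and `z^k`, `z^{k-1/2}` are prox
points of `G_{k-1}` taken at points that differ by
`t_{k-1}(V_{k-1}(z^{k-3/2}) - V_{k-1}(z^{k-1/2}))`.
The `σ_k μ`-strong monotonicity of `V_k`, combined with
`½‖z^k - z‖² ≤ ‖z^k - z^{k+1/2}‖² + ‖z^{k+1/2} - z‖²`, produces the contraction factor
`1 - t_k σ_k μ`; the step condition makes the remaining multiple of `‖z^k - z^{k+1/2}‖²`
nonpositive and the coefficient of `D_k` at most `1 - t_k σ_k μ`.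
-/

noncomputable section

open scoped RealInnerProductSpace
open Filter Topology

variable {Z : Type*} [NormedAddCommGroup Z] [InnerProductSpace ℝ Z] [CompleteSpace Z]

/-- Effective domain of an extended-real-valued function. -/
def edom {Z : Type*} (g : Z → EReal) : Set Z := {z | g z < ⊤}

/-- `g` is proper, convex and lower semicontinuous. -/
structure ProperConvexLsc (g : Z → EReal) : Prop where
  ne_bot : ∀ z, g z ≠ ⊥
  proper : ∃ z, g z < ⊤
  convex : ∀ x y : Z, ∀ a b : ℝ, 0 ≤ a → 0 ≤ b → a + b = 1 →
    g (a • x + b • y) ≤ (a : EReal) * g x + (b : EReal) * g y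
  lsc : LowerSemicontinuous g

/-- Monotonicity of an operator on a real Hilbert space. -/
def IsMonotoneOp (F : Z → Z) : Prop := ∀ x y : Z, 0 ≤ ⟪F x - F y, x - y⟫

/-- Lipschitz continuity with (real) constant `L`. -/
def IsLipOp (L : ℝ) (F : Z → Z) : Prop := ∀ x y : Z, ‖F x - F y‖ ≤ L * ‖x - y‖

/-- The bifunction `H^{(F,g)}(z,y) = ⟪F y, z - y⟫ + g z - g y`. -/
def Hb (F : Z → Z) (g : Z → EReal) (z y : Z) : EReal :=
  ((⟪F y, z - y⟫ : ℝ) : EReal) + g z - g y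

/-- The localized dual gap function `Θ(z | F,g,C)`. -/
def gapFn (F : Z → Z) (g : Z → EReal) (C : Set Z) (z : Z) : EReal :=
  ⨆ y ∈ C, Hb F g z y

/-- The convex subdifferential of an extended-real-valued function. -/
def subdiff (g : Z → EReal) (x : Z) : Set Z :=
  {ξ : Z | ∀ y : Z, ((⟪ξ, y - x⟫ : ℝ) : EReal) + g x ≤ g y}

/-- The solution set `zer(F + ∂g)`. -/
def zerFg (F : Z → Z) (g : Z → EReal) : Set Z := {z : Z | -F z ∈ subdiff g z}

/-- The normal cone to a set `C` at `z`. -/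
def normalCone (C : Set Z) (z : Z) : Set Z :=
  {ξ : Z | z ∈ C ∧ ∀ z' ∈ C, ⟪ξ, z' - z⟫ ≤ 0}

/-- The solution set `zer(F + ∂g + N_C)`. -/
def zerFgN (F : Z → Z) (g : Z → EReal) (C : Set Z) : Set Z :=
  {z : Z | ∃ ξ ∈ subdiff g z, ∃ p ∈ normalCone C z, F z + ξ + p = 0}

/-- The solution set `S₁` of problem (P): points of `S₂` solving the upper HVI over `S₂`. -/
def solP (F₁ : Z → Z) (g₁ : Z → EReal) (S₂ : Set Z) : Set Z :=
  {zs : Z | zs ∈ S₂ ∧ ∀ u ∈ S₂, 0 ≤ Hb F₁ g₁ u zs}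

/-- `(α,ρ)`-weak sharpness of the solution set `S` of `HVI(F,g)`. -/
def WeakSharp (F : Z → Z) (g : Z → EReal) (S : Set Z) (α ρ : ℝ) : Prop :=
  ∀ zs ∈ S, ∀ z ∈ edom g,
    (((α / ρ) * Metric.infDist z S ^ ρ : ℝ) : EReal) ≤ Hb F g z zs

/-- Support function of a set. -/
def suppFn (p : Z) (C : Set Z) : EReal := ⨆ z ∈ C, ((⟪p, z⟫ : ℝ) : EReal)

/-- The Fitzpatrick-type function `φ^{(F,g)}(z,u)`. -/
def phiFn (F : Z → Z) (g : Z → EReal) (z u : Z) : EReal :=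
  ⨆ y ∈ edom g, (Hb F g z y + ((⟪y, u⟫ : ℝ) : EReal))

/-- `x = prox_{τ G}(u)`, via the variational characterization
`⟪u - x, v - x⟫ ≤ τ (G v - G x)` for all `v`. -/
def IsProx (τ : ℝ) (G : Z → EReal) (u x : Z) : Prop :=
  ∀ v : Z, ((⟪u - x, v - x⟫ : ℝ) : EReal) ≤ (τ : EReal) * (G v - G x)

/-- The Tikhonov-regularized operator `V_k = F₂ + σ_k F₁`. -/
def Vop (F₁ F₂ : Z → Z) (σ : ℕ → ℝ) (k : ℕ) (x : Z) : Z := F₂ x + σ k • F₁ x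

/-- The Tikhonov-regularized function `G_k = g₂ + σ_k g₁`. -/
def Gfun (g₁ g₂ : Z → EReal) (σ : ℕ → ℝ) (k : ℕ) (v : Z) : EReal :=
  g₂ v + ((σ k : ℝ) : EReal) * g₁ v

/-- The Attouch–Czarnecki summability condition. -/
def ACcond (F₂ : Z → Z) (g₂ : Z → EReal) (S₂ : Set Z) (t σ : ℕ → ℝ) : Prop :=
  ∀ p : Z, (∃ zs : Z, p ∈ normalCone S₂ zs) →
    ∃ M : ℝ, ∀ K : ℕ,
      (∑ k ∈ Finset.Icc 1 K,
        ((t k : ℝ) : EReal) * ((⨆ zs ∈ S₂, phiFn F₂ g₂ zs (σ k • p)) - suppFn (σ k • p) S₂))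
        ≤ (M : EReal)

/-- `T_K = ∑_{k=1}^K t_k`. -/
def Tsum (t : ℕ → ℝ) (K : ℕ) : ℝ := ∑ k ∈ Finset.Icc 1 K, t k

/-- The ergodic average `z̄^K` (here `w k` plays the role of `z^{k+1/2}`). -/
def zbar (t : ℕ → ℝ) (w : ℕ → Z) (K : ℕ) : Z :=
  (Tsum t K)⁻¹ • ∑ k ∈ Finset.Icc 1 K, t k • w k

/-- Weights `γ_k = 1/∏_{i=1}^k (1 - t_i σ_i μ)` (so `γ_0 = 1`). -/
def gammaW (t σ : ℕ → ℝ) (μ : ℝ) (k : ℕ) : ℝ :=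
  (∏ i ∈ Finset.Icc 1 k, (1 - t i * σ i * μ))⁻¹

/-- The weighted ergodic average used in the strongly monotone case. -/
def zbarW (t σ : ℕ → ℝ) (μ : ℝ) (w : ℕ → Z) (K : ℕ) : Z :=
  (∑ i ∈ Finset.Icc 1 K, t i * σ i * gammaW t σ μ i)⁻¹ •
    ∑ i ∈ Finset.Icc 1 K, (t i * σ i * gammaW t σ μ i) • w i

/-- Convex tangent cone `T_C(x) = cl(⋃_{λ>0} (C - x)/λ)`. -/
def tangentConeCvx (C : Set Z) (x : Z) : Set Z :=
  closure {v : Z | ∃ lam : ℝ, 0 < lam ∧ ∃ c ∈ C, v = lam⁻¹ • (c - x)}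

/-- Polar cone of a set. -/
def polarCone (K : Set Z) : Set Z := {z : Z | ∀ x ∈ K, ⟪z, x⟫ ≤ 0}

section Prox

variable {E : Type*} [NormedAddCommGroup E] [InnerProductSpace ℝ E] {τ : ℝ} {G : E → EReal}
  {u x : E}

theorem IsProx.inner_le {gv gx : ℝ} (h : IsProx τ G u x) (v : E) (hv : G v = gv)
    (hx : G x = gx) : ⟪u - x, v - x⟫ ≤ τ * (gv - gx) := by
  have hv' := h v
  rw [hv, hx, ← EReal.coe_sub, ← EReal.coe_mul] at hv'
  exact_mod_cast hv'

/-- In `EReal`, `G v - ⊤ = ⊥` for every `v`, so `G x = ⊤` would falsify the prox inequality. -/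
theorem IsProx.ne_top (h : IsProx τ G u x) (hτ : 0 < τ) : G x ≠ ⊤ := by
  intro hx
  have hx' := h x
  rw [hx, EReal.sub_top, EReal.mul_bot_of_pos (by exact_mod_cast hτ)] at hx'
  exact EReal.coe_ne_bot _ (le_bot_iff.mp hx')

theorem IsProx.norm_sub_le {u' x' : E} (hτ : 0 < τ) (h : IsProx τ G u x)
    (h' : IsProx τ G u' x') (hx : G x ≠ ⊥) (hx' : G x' ≠ ⊥) : ‖x - x'‖ ≤ ‖u - u'‖ := by
  have h₁ := h.inner_le x' (EReal.coe_toReal (h'.ne_top hτ) hx').symm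
    (EReal.coe_toReal (h.ne_top hτ) hx).symm
  have h₂ := h'.inner_le x (EReal.coe_toReal (h.ne_top hτ) hx).symm
    (EReal.coe_toReal (h'.ne_top hτ) hx').symm
  have hsq : ⟪u - u', x - x'⟫ - ‖x - x'‖ ^ 2 = ⟪u - x, x - x'⟫ - ⟪u' - x', x - x'⟫ := by
    rw [← real_inner_self_eq_norm_sq, ← inner_sub_left, ← inner_sub_left]
    congr 1
    abel
  rw [← neg_sub x x', inner_neg_right] at h₁
  have hcs := real_inner_le_norm (u - u') (x - x')
  nlinarith [norm_nonneg (x - x'), norm_nonneg (u - u')]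

theorem IsProx.norm_sub_sq_le_of_sub_smul {x₀ a b x' : E} (hτ : 0 < τ)
    (h : IsProx τ G (x₀ - τ • a) x) (h' : IsProx τ G (x₀ - τ • b) x') (hx : G x ≠ ⊥)
    (hx' : G x' ≠ ⊥) : ‖x - x'‖ ^ 2 ≤ τ ^ 2 * ‖b - a‖ ^ 2 := by
  have hne := h.norm_sub_le hτ h' hx hx'
  rw [sub_sub_sub_cancel_left, ← smul_sub, norm_smul, Real.norm_of_nonneg hτ.le] at hne
  rw [← mul_pow]
  exact pow_le_pow_left₀ (norm_nonneg _) hne 2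

end Prox

section Regularization

variable {E : Type*} {g₁ g₂ : E → EReal} {σ : ℕ → ℝ} {k : ℕ}

theorem Gfun_eq_coe {y : E} {r₁ r₂ : ℝ} (h₁ : g₁ y = r₁) (h₂ : g₂ y = r₂) :
    Gfun g₁ g₂ σ k y = ((r₂ + σ k * r₁ : ℝ) : EReal) := by
  rw [Gfun, h₁, h₂]
  norm_cast

theorem Gfun_ne_bot {y : E} (hσ : 0 ≤ σ k) (h₁ : g₁ y ≠ ⊥) (h₂ : g₂ y ≠ ⊥) :
    Gfun g₁ g₂ σ k y ≠ ⊥ := by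
  rw [Gfun, EReal.add_ne_bot_iff, EReal.mul_ne_bot]
  exact ⟨h₂, Or.inl (EReal.coe_ne_bot _), Or.inr h₁, Or.inl (EReal.coe_ne_top _),
    Or.inl (by exact_mod_cast hσ)⟩

theorem exists_coe_of_Gfun_ne_top {y : E} (hσ : 0 < σ k) (h₁ : g₁ y ≠ ⊥) (h₂ : g₂ y ≠ ⊥)
    (h : Gfun g₁ g₂ σ k y ≠ ⊤) : ∃ r₁ r₂ : ℝ, g₁ y = r₁ ∧ g₂ y = r₂ := by
  have h₁' : g₁ y ≠ ⊤ := by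
    intro h₁'
    rw [Gfun, h₁', EReal.coe_mul_top_of_pos hσ, EReal.add_top_of_ne_bot h₂] at h
    exact h rfl
  have h₂' : g₂ y ≠ ⊤ := by
    intro h₂'
    rw [Gfun, h₂', ← EReal.coe_toReal h₁' h₁, ← EReal.coe_mul, EReal.top_add_coe] at h
    exact h rfl
  exact ⟨_, _, (EReal.coe_toReal h₁' h₁).symm, (EReal.coe_toReal h₂' h₂).symm⟩

variable [NormedAddCommGroup E] [InnerProductSpace ℝ E] {F₁ F₂ : E → E}

theorem inner_Vop_left (x v : E) :
    ⟪Vop F₁ F₂ σ k x, v⟫ = ⟪F₂ x, v⟫ + σ k * ⟪F₁ x, v⟫ := by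
  rw [Vop, inner_add_left, real_inner_smul_left]

theorem isLipOp_Vop {L₁ L₂ : ℝ} (hF₁ : IsLipOp L₁ F₁) (hF₂ : IsLipOp L₂ F₂) (hσ : 0 ≤ σ k) :
    IsLipOp (L₂ + σ k * L₁) (Vop F₁ F₂ σ k) := by
  intro x y
  have e : Vop F₁ F₂ σ k x - Vop F₁ F₂ σ k y = (F₂ x - F₂ y) + σ k • (F₁ x - F₁ y) := by
    simp only [Vop, smul_sub]
    abel
  rw [e]
  calc ‖(F₂ x - F₂ y) + σ k • (F₁ x - F₁ y)‖
      ≤ ‖F₂ x - F₂ y‖ + σ k * ‖F₁ x - F₁ y‖ :=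
        (norm_add_le _ _).trans_eq (by rw [norm_smul, Real.norm_of_nonneg hσ])
    _ ≤ L₂ * ‖x - y‖ + σ k * (L₁ * ‖x - y‖) := by gcongr <;> apply_assumption
    _ = (L₂ + σ k * L₁) * ‖x - y‖ := by ring

theorem strongMono_Vop {μ : ℝ} (hF₂ : IsMonotoneOp F₂)
    (hF₁ : ∀ x y : E, μ * ‖x - y‖ ^ 2 ≤ ⟪F₁ x - F₁ y, x - y⟫) (hσ : 0 ≤ σ k) (x y : E) :
    σ k * μ * ‖x - y‖ ^ 2 ≤ ⟪Vop F₁ F₂ σ k x - Vop F₁ F₂ σ k y, x - y⟫ := by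
  have e : ⟪Vop F₁ F₂ σ k x - Vop F₁ F₂ σ k y, x - y⟫
      = ⟪F₂ x - F₂ y, x - y⟫ + σ k * ⟪F₁ x - F₁ y, x - y⟫ := by
    rw [inner_sub_left, inner_Vop_left, inner_Vop_left, inner_sub_left, inner_sub_left]
    ring
  rw [e]
  nlinarith [hF₂ x y, mul_le_mul_of_nonneg_left (hF₁ x y) hσ]

end Regularization

theorem norm_add_sq_le {E : Type*} [SeminormedAddGroup E] (a b : E) :
    ‖a + b‖ ^ 2 ≤ 2 * (‖a‖ ^ 2 + ‖b‖ ^ 2) :=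
  (pow_le_pow_left₀ (norm_nonneg _) (norm_add_le a b) 2).trans add_sq_le

section OptimisticStep

variable {E : Type*} [NormedAddCommGroup E] [InnerProductSpace ℝ E]

theorem optimistic_step_basic {t Gx' Gy Gu : ℝ} {x x' y u a b : E}
    (hA : ⟪x - t • a - x', u - x'⟫ ≤ t * (Gu - Gx'))
    (hB : ⟪x - t • b - y, x' - y⟫ ≤ t * (Gx' - Gy)) :
    1 / 2 * ‖x' - u‖ ^ 2 ≤ 1 / 2 * ‖x - u‖ ^ 2 - 1 / 2 * ‖x - y‖ ^ 2
      + t ^ 2 / 2 * ‖b - a‖ ^ 2 - t * (⟪a, y - u⟫ + Gy - Gu) := by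
  rw [sub_right_comm, inner_sub_left, real_inner_smul_left] at hA hB
  have hA₃ : ⟪x - x', u - x'⟫ = (‖x - x'‖ ^ 2 + ‖x' - u‖ ^ 2 - ‖x - u‖ ^ 2) / 2 := by
    have h := norm_sub_sq_real (x - x') (u - x')
    rw [sub_sub_sub_cancel_right, norm_sub_rev u x'] at h
    linarith
  have hB₃ : ⟪x - y, x' - y⟫ = (‖x - y‖ ^ 2 + ‖x' - y‖ ^ 2 - ‖x - x'‖ ^ 2) / 2 := by
    have h := norm_sub_sq_real (x - y) (x' - y)
    rw [sub_sub_sub_cancel_right] at h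
    linarith
  have hsplit : t * ⟪a, u - x'⟫ + t * ⟪b, x' - y⟫ = ⟪t • (b - a), x' - y⟫ - t * ⟪a, y - u⟫ := by
    rw [real_inner_smul_left, inner_sub_left, show u - x' = -(y - u) - (x' - y) by abel,
      inner_sub_right, inner_neg_right]
    ring
  -- Young's inequality absorbs the optimistic correction into `‖x' - y‖²`
  have hyoung : ⟪t • (b - a), x' - y⟫ ≤ t ^ 2 / 2 * ‖b - a‖ ^ 2 + 1 / 2 * ‖x' - y‖ ^ 2 := by
    have hcs := real_inner_le_norm (t • (b - a)) (x' - y)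
    have hn : ‖t • (b - a)‖ ^ 2 = t ^ 2 * ‖b - a‖ ^ 2 := by
      rw [norm_smul, mul_pow, Real.norm_eq_abs, sq_abs]
    nlinarith [sq_nonneg (‖t • (b - a)‖ - ‖x' - y‖)]
  linarith

theorem optimistic_step_energy_le {V : E → E} {L ν t D Gx' Gy Gu : ℝ} {x x' y y₀ u : E}
    (ht : 0 ≤ t) (hν : 0 ≤ ν) (hstep : 4 * t ^ 2 * L ^ 2 + 2 * t * ν ≤ 1)
    (hmono : ν * ‖y - u‖ ^ 2 ≤ ⟪V y - V u, y - u⟫) (hlip : ‖V y₀ - V y‖ ≤ L * ‖y₀ - y‖)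
    (hprev : ‖x - y₀‖ ^ 2 ≤ 2 * D)
    (hA : ⟪x - t • V y - x', u - x'⟫ ≤ t * (Gu - Gx'))
    (hB : ⟪x - t • V y₀ - y, x' - y⟫ ≤ t * (Gx' - Gy)) :
    1 / 2 * ‖x' - u‖ ^ 2 + t ^ 2 / 2 * ‖V y₀ - V y‖ ^ 2 ≤
      (1 - t * ν) * (1 / 2 * ‖x - u‖ ^ 2 + D) - t * (⟪V u, y - u⟫ + Gy - Gu) := by
  have hbasic := optimistic_step_basic hA hB
  have hsplit : ⟪V y, y - u⟫ = ⟪V y - V u, y - u⟫ + ⟪V u, y - u⟫ := by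
    rw [inner_sub_left]
    ring
  have hlip₂ : ‖V y₀ - V y‖ ^ 2 ≤ L ^ 2 * ‖y₀ - y‖ ^ 2 := by
    rw [← mul_pow]
    exact pow_le_pow_left₀ (norm_nonneg _) hlip 2
  have hy₀ : ‖y₀ - y‖ ^ 2 ≤ 2 * (‖x - y‖ ^ 2 + ‖x - y₀‖ ^ 2) := by
    simpa only [sub_add_sub_cancel', norm_sub_rev x y₀] using norm_add_sq_le (x - y) (y₀ - x)
  have hu : ‖x - u‖ ^ 2 ≤ 2 * (‖x - y‖ ^ 2 + ‖y - u‖ ^ 2) := by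
    simpa only [sub_add_sub_cancel] using norm_add_sq_le (x - y) (y - u)
  rw [hsplit] at hbasic
  have htν : 0 ≤ t * ν := mul_nonneg ht hν
  have hD : 0 ≤ D := by nlinarith [sq_nonneg ‖x - y₀‖]
  linarith [mul_le_mul_of_nonneg_left hmono ht, mul_le_mul_of_nonneg_left hu htν,
    mul_le_mul_of_nonneg_left hlip₂ (sq_nonneg t),
    mul_le_mul_of_nonneg_left hy₀ (sq_nonneg (t * L)),
    mul_le_mul_of_nonneg_left hprev (sq_nonneg (t * L)),
    mul_nonneg (by linarith : 0 ≤ 1 / 2 - 2 * t ^ 2 * L ^ 2 - t * ν) (sq_nonneg ‖x - y‖),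
    mul_nonneg (by linarith : 0 ≤ 1 - t * ν - 4 * t ^ 2 * L ^ 2) hD]

end OptimisticStep

theorem norm_sub_prev_sq_le_of_isProx {E : Type*} [NormedAddCommGroup E] [InnerProductSpace ℝ E]
    {F₁ F₂ : E → E} {g₁ g₂ : E → EReal} {σ t D : ℕ → ℝ} {z w : ℕ → E}
    (hG : ∀ j y, Gfun g₁ g₂ σ j y ≠ ⊥) (htpos : ∀ j, 0 < t j) (hinit : w 0 = z 1)
    (hw : ∀ k ≥ 1, IsProx (t k) (Gfun g₁ g₂ σ k)
      (z k - t k • Vop F₁ F₂ σ k (w (k - 1))) (w k))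
    (hz : ∀ k ≥ 1, IsProx (t k) (Gfun g₁ g₂ σ k)
      (z k - t k • Vop F₁ F₂ σ k (w k)) (z (k + 1)))
    (hD1 : D 1 = 0)
    (hD : ∀ k ≥ 2, D k = t (k - 1) ^ 2 / 2 *
      ‖Vop F₁ F₂ σ (k - 1) (w (k - 2)) - Vop F₁ F₂ σ (k - 1) (w (k - 1))‖ ^ 2)
    {k : ℕ} (hk : 1 ≤ k) : ‖z k - w (k - 1)‖ ^ 2 ≤ 2 * D k := by
  obtain rfl | hk₂ := hk.eq_or_lt
  · simp [hinit, hD1]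
  obtain ⟨j, rfl⟩ : ∃ j, k = j + 1 + 1 := ⟨k - 2, by omega⟩
  rw [hD (j + 1 + 1) (by omega), show j + 1 + 1 - 2 = j + 1 - 1 by omega, Nat.add_sub_cancel]
  linarith [(hz (j + 1) (by omega)).norm_sub_sq_le_of_sub_smul (htpos _) (hw (j + 1) (by omega))
    (hG _ _) (hG _ _)]

theorem energy_recursion_strongly_monotone_general
    (F₁ F₂ : Z → Z) (LF₁ LF₂ : ℝ) (g₁ g₂ : Z → EReal)
    (hF₂m : IsMonotoneOp F₂)
    (hF₁L : IsLipOp LF₁ F₁) (hF₂L : IsLipOp LF₂ F₂)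
    (hg₁ : ProperConvexLsc g₁) (hg₂ : ProperConvexLsc g₂)
    (μ : ℝ) (hμ : 0 < μ)
    (hF₁sm : ∀ x y : Z, μ * ‖x - y‖ ^ 2 ≤ ⟪F₁ x - F₁ y, x - y⟫)
    (σ t : ℕ → ℝ) (hσpos : ∀ k, 0 < σ k) (htpos : ∀ k, 0 < t k)
    (hstep : ∀ k ≥ 1, 4 * t k ^ 2 * (LF₂ + σ k * LF₁) ^ 2 + 2 * t k * σ k * μ ≤ 1)
    (z w : ℕ → Z) (hinit : w 0 = z 1)
    (hw : ∀ k ≥ 1, IsProx (t k) (Gfun g₁ g₂ σ k)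
      (z k - t k • Vop F₁ F₂ σ k (w (k - 1))) (w k))
    (hz : ∀ k ≥ 1, IsProx (t k) (Gfun g₁ g₂ σ k)
      (z k - t k • Vop F₁ F₂ σ k (w k)) (z (k + 1)))
    (D : ℕ → ℝ) (hD1 : D 1 = 0)
    (hD : ∀ k ≥ 2, D k = t (k - 1) ^ 2 / 2 *
      ‖Vop F₁ F₂ σ (k - 1) (w (k - 2)) - Vop F₁ F₂ σ (k - 1) (w (k - 1))‖ ^ 2) :
    ∀ zz : Z, ∀ k ≥ 1,
      ((1 / 2 * ‖z (k + 1) - zz‖ ^ 2 + D (k + 1) : ℝ) : EReal) ≤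
        (((1 - t k * σ k * μ) * (1 / 2 * ‖z k - zz‖ ^ 2 + D k) : ℝ) : EReal)
        - (t k : EReal) * (((⟪F₂ zz, w k - zz⟫ : ℝ) : EReal) + g₂ (w k) - g₂ zz
            + ((σ k : ℝ) : EReal) *
              (((⟪F₁ zz, w k - zz⟫ : ℝ) : EReal) + g₁ (w k) - g₁ zz)) := by
  have hfin : ∀ {j : ℕ} {v x : Z}, IsProx (t j) (Gfun g₁ g₂ σ j) v x →
      ∃ r₁ r₂ : ℝ, g₁ x = r₁ ∧ g₂ x = r₂ := fun h =>
    exists_coe_of_Gfun_ne_top (hσpos _) (hg₁.ne_bot _) (hg₂.ne_bot _) (h.ne_top (htpos _))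
  intro u k hk
  by_cases hu : g₁ u = ⊤ ∨ g₂ u = ⊤
  · have hbot : ((⟪F₂ u, w k - u⟫ : ℝ) : EReal) + g₂ (w k) - g₂ u
        + ((σ k : ℝ) : EReal) * (((⟪F₁ u, w k - u⟫ : ℝ) : EReal) + g₁ (w k) - g₁ u) = ⊥ := by
      rcases hu with h | h <;> simp [h, EReal.coe_mul_bot_of_pos (hσpos k)]
    rw [hbot, EReal.mul_bot_of_pos (by exact_mod_cast htpos k), EReal.coe_sub_bot]
    exact le_top
  push Not at hu
  obtain ⟨s₁, s₂, hs₁, hs₂⟩ : ∃ s₁ s₂ : ℝ, g₁ u = s₁ ∧ g₂ u = s₂ :=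
    ⟨_, _, (EReal.coe_toReal hu.1 (hg₁.ne_bot u)).symm, (EReal.coe_toReal hu.2 (hg₂.ne_bot u)).symm⟩
  obtain ⟨r₁, r₂, hr₁, hr₂⟩ := hfin (hw k hk)
  obtain ⟨q₁, q₂, hq₁, hq₂⟩ := hfin (hz k hk)
  have hprev := norm_sub_prev_sq_le_of_isProx
    (fun j y => Gfun_ne_bot (hσpos j).le (hg₁.ne_bot y) (hg₂.ne_bot y)) htpos hinit hw hz hD1 hD hk
  have key := optimistic_step_energy_le (htpos k).le (mul_nonneg (hσpos k).le hμ.le)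
    (by linarith [hstep k hk]) (strongMono_Vop hF₂m hF₁sm (hσpos k).le (w k) u)
    (isLipOp_Vop hF₁L hF₂L (hσpos k).le _ _) hprev
    ((hz k hk).inner_le u (Gfun_eq_coe hs₁ hs₂) (Gfun_eq_coe hq₁ hq₂))
    ((hw k hk).inner_le (z (k + 1)) (Gfun_eq_coe hq₁ hq₂) (Gfun_eq_coe hr₁ hr₂))
  rw [inner_Vop_left] at key
  rw [hr₁, hr₂, hs₁, hs₂, hD (k + 1) (by omega), Nat.add_sub_cancel,
    show k + 1 - 2 = k - 1 by omega]
  norm_cast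
  linarith

/-- refined energy recursion under `μ`-strong monotonicity of `F₁`
and the step condition `4 t_k² L_k² + 2 t_k σ_k μ ≤ 1`. -/
theorem energy_recursion_strongly_monotone
    (F₁ F₂ : Z → Z) (LF₁ LF₂ : ℝ) (g₁ g₂ : Z → EReal)
    (hF₁m : IsMonotoneOp F₁) (hF₂m : IsMonotoneOp F₂)
    (hF₁L : IsLipOp LF₁ F₁) (hF₂L : IsLipOp LF₂ F₂)
    (hg₁ : ProperConvexLsc g₁) (hg₂ : ProperConvexLsc g₂)
    (hdom : (edom g₁ ∩ edom g₂).Nonempty)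
    (μ : ℝ) (hμ : 0 < μ)
    (hF₁sm : ∀ x y : Z, μ * ‖x - y‖ ^ 2 ≤ ⟪F₁ x - F₁ y, x - y⟫)
    (σ t : ℕ → ℝ) (hσpos : ∀ k, 0 < σ k) (hσdec : Antitone σ) (htpos : ∀ k, 0 < t k)
    (hstep : ∀ k ≥ 1, 4 * t k ^ 2 * (LF₂ + σ k * LF₁) ^ 2 + 2 * t k * σ k * μ ≤ 1)
    (z w : ℕ → Z) (hinit : w 0 = z 1)
    (hw : ∀ k ≥ 1, IsProx (t k) (Gfun g₁ g₂ σ k)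
      (z k - t k • Vop F₁ F₂ σ k (w (k - 1))) (w k))
    (hz : ∀ k ≥ 1, IsProx (t k) (Gfun g₁ g₂ σ k)
      (z k - t k • Vop F₁ F₂ σ k (w k)) (z (k + 1)))
    (D : ℕ → ℝ) (hD1 : D 1 = 0)
    (hD : ∀ k ≥ 2, D k = t (k - 1) ^ 2 / 2 *
      ‖Vop F₁ F₂ σ (k - 1) (w (k - 2)) - Vop F₁ F₂ σ (k - 1) (w (k - 1))‖ ^ 2) :
    ∀ zz : Z, ∀ k ≥ 1,
      ((1 / 2 * ‖z (k + 1) - zz‖ ^ 2 + D (k + 1) : ℝ) : EReal) ≤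
        (((1 - t k * σ k * μ) * (1 / 2 * ‖z k - zz‖ ^ 2 + D k) : ℝ) : EReal)
        - (t k : EReal) * (((⟪F₂ zz, w k - zz⟫ : ℝ) : EReal) + g₂ (w k) - g₂ zz
            + ((σ k : ℝ) : EReal) *
              (((⟪F₁ zz, w k - zz⟫ : ℝ) : EReal) + g₁ (w k) - g₁ zz)) :=
  energy_recursion_strongly_monotone_general F₁ F₂ LF₁ LF₂ g₁ g₂ hF₂m hF₁L hF₂L hg₁ hg₂ μ hμ hF₁sm σ
    t hσpos htpos hstep z w hinit hw hz D hD1 hD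

end
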